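/- In the counterexample MDP, if μ = π then the constrained minimizer of the uncorrected DAE loss coincides with the true values: V*(1) = π(u|2)/2 = V^π(1), A*(2,u) = A^π(2,u), A*(2,d) = A^π(2,d). -/

import Mathlib

/-!
On the constraint set `πu Au + πd Ad = 0` (with `πu + πd = 1`) the loss completes the square as
`πu² / 4 + (V - πu / 2)² + ½ πu πd (1 - Au + Ad)²`. The true values lie on the constraint set and
make both squares vanish, so a constrained minimizer has `V = πu / 2` and `Au - Ad = 1`; together
with the constraint this determines `Au` and `Ad`.
-/

/-- The uncorrected DAE loss `L(Â, V̂)` with `μ = π`, at `V = V̂(1)`, `Au = Â(2,u)`, `Ad = Â(2,d)`. -/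
noncomputable def daeLoss (πu πd V Au Ad : ℝ) : ℝ :=
  (1/2) * πu * (1 - Au - V) ^ 2 + (1/2) * πd * (0 - Ad - V) ^ 2 + (1/2) * V ^ 2

theorem daeLoss_eq_of_constraint {πu πd V Au Ad : ℝ} (hπ : πu + πd = 1)
    (hconstr : πu * Au + πd * Ad = 0) :
    daeLoss πu πd V Au Ad
      = πu ^ 2 / 4 + (V - πu / 2) ^ 2 + (1/2) * πu * πd * (1 - Au + Ad) ^ 2 := by
  obtain rfl : πd = 1 - πu := by linarith
  unfold daeLoss
  linear_combination ((1/2) * (πu * Au + (1 - πu) * Ad) - πu + V) * hconstr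

theorem daeLoss_true_values {πu πd : ℝ} (hπ : πu + πd = 1) :
    daeLoss πu πd (πu / 2) (1 - πu) (-πu) = πu ^ 2 / 4 := by
  rw [daeLoss_eq_of_constraint hπ (by linear_combination -πu * hπ)]
  ring

theorem advantages_eq_of_constraint_of_gap_eq_zero {πu πd Au Ad : ℝ} (hπ : πu + πd = 1)
    (hconstr : πu * Au + πd * Ad = 0) (hgap : 1 - Au + Ad = 0) :
    Au = 1 - πu ∧ Ad = -πu := by
  have hAu : Au = 1 - πu := by linear_combination hconstr - πd * hgap + (1 - Au) * hπ
  exact ⟨hAu, by linear_combination hAu + hgap⟩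

/-- In the counterexample MDP, if μ = π (on-policy) then the constrained
minimizer of the uncorrected DAE loss equals the true values
V^π(1) = π(u)/2, A^π(2,u) = 1 − π(u), A^π(2,d) = −π(u). -/
theorem uncorrected_dae_onpolicy_exact (πu πd : ℝ)
    (hπu : 0 < πu) (hπd : 0 < πd) (hπ : πu + πd = 1)
    (V Au Ad : ℝ)
    (hconstr : πu * Au + πd * Ad = 0)
    (hmin : ∀ V' Au' Ad' : ℝ, πu * Au' + πd * Ad' = 0 →
      (1/2) * πu * (1 - Au - V) ^ 2 + (1/2) * πd * (0 - Ad - V) ^ 2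
          + (1/2) * V ^ 2
        ≤ (1/2) * πu * (1 - Au' - V') ^ 2 + (1/2) * πd * (0 - Ad' - V') ^ 2
          + (1/2) * V' ^ 2) :
    V = πu / 2 ∧ Au = 1 - πu ∧ Ad = -πu := by
  have hle : daeLoss πu πd V Au Ad ≤ daeLoss πu πd (πu / 2) (1 - πu) (-πu) :=
    hmin _ _ _ (by linear_combination -πu * hπ)
  rw [daeLoss_eq_of_constraint hπ hconstr, daeLoss_true_values hπ] at hle
  have hweight : 0 < (1/2) * πu * πd := by positivity
  have hV : (V - πu / 2) ^ 2 = 0 := by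
    nlinarith [sq_nonneg (V - πu / 2), mul_nonneg hweight.le (sq_nonneg (1 - Au + Ad))]
  have hgap : (1 - Au + Ad) ^ 2 = 0 := by
    nlinarith [mul_nonneg hweight.le (sq_nonneg (1 - Au + Ad))]
  exact ⟨sub_eq_zero.mp (pow_eq_zero_iff two_ne_zero |>.mp hV),
    advantages_eq_of_constraint_of_gap_eq_zero hπ hconstr (pow_eq_zero_iff two_ne_zero |>.mp hgap)⟩
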